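/- For every integer s ≥ 2, Σ (2u+1) · t_u · t_{v₁} · t_{v₂} · t_{v₃} = t_s · (s − 3s/(s+2)) = t_s · s(s−1)/(s+2), where the sum is over all quadruples (u, v₁, v₂, v₃) of nonnegative integers with u + v₁ + v₂ + v₃ = s − 2. (This quantity equals the total number, over all plane rooted trees with s edges, of unordered pairs of distinct edges lying in the same exit cluster.) -/

import Mathlib

/-!
The four coordinates of a tuple `u + v₁ + v₂ + v₃ = s - 2` play symmetric roles in the product
`t_u t_{v₁} t_{v₂} t_{v₃}`, so the weight `2u + 1` may be replaced by its average `s / 2`. What is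
left is `s / 2` times the fourfold Catalan convolution, which Segner's recurrence evaluates to
`t_{s+1} - 2 t_s`; the ratio `t_{s+1} / t_s = 2 (2s + 1) / (s + 2)` then gives the closed form.
-/

/-- `t_k = (2k)!/(k!(k+1)!)`, the `k`-th Catalan number, as a real number. -/
noncomputable def tReal (k : ℕ) : ℝ :=
  (Nat.factorial (2 * k) : ℝ) / ((Nat.factorial k : ℝ) * (Nat.factorial (k + 1) : ℝ))

open Finset

namespace Finset.Nat

theorem sum_antidiagonalTuple_succ {M : Type*} [AddCommMonoid M] (k n : ℕ)
    (f : (Fin (k + 1) → ℕ) → M) :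
    ∑ l ∈ antidiagonalTuple (k + 1) n, f l =
      ∑ p ∈ antidiagonal n, ∑ x ∈ antidiagonalTuple k p.2, f (Fin.cons p.1 x) := by
  change ((List.Nat.antidiagonalTuple (k + 1) n : Multiset (Fin (k + 1) → ℕ)).map f).sum =
    (((List.Nat.antidiagonal n : List (ℕ × ℕ)) : Multiset (ℕ × ℕ)).map fun p : ℕ × ℕ =>
      ((List.Nat.antidiagonalTuple k p.2 : Multiset (Fin k → ℕ)).map
        fun x => f (Fin.cons p.1 x)).sum).sum
  simp only [Multiset.map_coe, Multiset.sum_coe, List.Nat.antidiagonalTuple, List.flatMap_def,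
    List.map_flatten, List.sum_flatten, List.map_map, Function.comp_def]

theorem sum_antidiagonalTuple_comp_perm {M : Type*} [AddCommMonoid M] {k : ℕ} (n : ℕ)
    (σ : Equiv.Perm (Fin k)) (f : (Fin k → ℕ) → M) :
    ∑ l ∈ antidiagonalTuple k n, f (l ∘ σ) = ∑ l ∈ antidiagonalTuple k n, f l := by
  refine sum_nbij' (· ∘ σ) (· ∘ σ.symm) ?_ ?_ ?_ ?_ (fun _ _ => rfl)
  · intro l hl
    rw [mem_antidiagonalTuple] at hl ⊢
    exact (Equiv.sum_comp σ l).trans hl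
  · intro l hl
    rw [mem_antidiagonalTuple] at hl ⊢
    exact (Equiv.sum_comp σ.symm l).trans hl
  all_goals intro l _; ext; simp

variable {R : Type*} [CommSemiring R]

theorem sum_antidiagonalTuple_succ_prod (g : ℕ → R) (k n : ℕ) :
    ∑ l ∈ antidiagonalTuple (k + 1) n, ∏ i, g (l i) =
      ∑ p ∈ antidiagonal n, g p.1 * ∑ l ∈ antidiagonalTuple k p.2, ∏ i, g (l i) := by
  simp only [sum_antidiagonalTuple_succ, Fin.prod_univ_succ, Fin.cons_zero, Fin.cons_succ, mul_sum]

theorem card_mul_sum_antidiagonalTuple_apply_mul_prod {k : ℕ} (n : ℕ) (g : ℕ → R) (i : Fin k) :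
    k * ∑ l ∈ antidiagonalTuple k n, (l i : R) * ∏ j, g (l j) =
      n * ∑ l ∈ antidiagonalTuple k n, ∏ j, g (l j) := by
  have hswap (j : Fin k) : ∑ l ∈ antidiagonalTuple k n, (l j : R) * ∏ j, g (l j) =
      ∑ l ∈ antidiagonalTuple k n, (l i : R) * ∏ j, g (l j) := by
    rw [← sum_antidiagonalTuple_comp_perm n (Equiv.swap i j)]
    refine sum_congr rfl fun l _ => ?_
    simp only [Function.comp_apply, Equiv.swap_apply_right]
    rw [Equiv.prod_comp (Equiv.swap i j) fun j => g (l j)]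
  calc (k : R) * ∑ l ∈ antidiagonalTuple k n, (l i : R) * ∏ j, g (l j)
      = ∑ j : Fin k, ∑ l ∈ antidiagonalTuple k n, (l j : R) * ∏ j, g (l j) := by
        simp [hswap]
    _ = ∑ l ∈ antidiagonalTuple k n, ((∑ j, l j : ℕ) : R) * ∏ j, g (l j) := by
        rw [sum_comm]; push_cast; simp only [sum_mul]
    _ = n * ∑ l ∈ antidiagonalTuple k n, ∏ j, g (l j) := by
        rw [mul_sum]
        exact sum_congr rfl fun l hl => by rw [mem_antidiagonalTuple.1 hl]

theorem card_mul_sum_antidiagonalTuple_two_mul_apply_add_one_mul_prod {k : ℕ} (n : ℕ) (g : ℕ → R)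
    (i : Fin k) :
    k * ∑ l ∈ antidiagonalTuple k n, (2 * (l i : R) + 1) * ∏ j, g (l j) =
      (2 * n + k) * ∑ l ∈ antidiagonalTuple k n, ∏ j, g (l j) := by
  simp only [add_mul, one_mul, sum_add_distrib, mul_add, mul_assoc, ← mul_sum,
    mul_left_comm (k : R) 2, card_mul_sum_antidiagonalTuple_apply_mul_prod]

end Finset.Nat

theorem succ_succ_mul_catalan_succ (n : ℕ) :
    (n + 2) * catalan (n + 1) = 2 * (2 * n + 1) * catalan n := by
  refine Nat.eq_of_mul_eq_mul_left n.succ_pos ?_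
  calc (n + 1) * ((n + 2) * catalan (n + 1))
      = (n + 1) * (n + 1).centralBinom := by rw [← succ_mul_catalan_eq_centralBinom]
    _ = 2 * (2 * n + 1) * ((n + 1) * catalan n) := by
        rw [Nat.succ_mul_centralBinom_succ, succ_mul_catalan_eq_centralBinom]
    _ = (n + 1) * (2 * (2 * n + 1) * catalan n) := by ring

theorem tReal_eq_catalan (k : ℕ) : tReal k = catalan k := by
  have hfac : (k + 1) * catalan k * k.factorial * k.factorial = (2 * k).factorial := by
    rw [succ_mul_catalan_eq_centralBinom, Nat.centralBinom]
    simpa [two_mul] using Nat.choose_mul_factorial_mul_factorial (by omega : k ≤ 2 * k)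
  rw [tReal, ← hfac, Nat.factorial_succ]
  push_cast
  field_simp

/-- The coefficient of `xⁿ` in `c(x)ᵏ`, for `c` the generating function of the Catalan numbers. -/
def catalanConv (k n : ℕ) : ℕ :=
  ∑ l ∈ Nat.antidiagonalTuple k n, ∏ i, catalan (l i)

theorem catalanConv_succ (k n : ℕ) :
    catalanConv (k + 1) n = ∑ p ∈ antidiagonal n, catalan p.1 * catalanConv k p.2 :=
  Nat.sum_antidiagonalTuple_succ_prod catalan k n

theorem catalanConv_one (n : ℕ) : catalanConv 1 n = catalan n := by
  simp [catalanConv]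

theorem catalanConv_two (n : ℕ) : catalanConv 2 n = catalan (n + 1) := by
  simp only [catalanConv_succ 1, catalanConv_one, catalan_succ']

theorem sum_antidiagonal_catalan_mul_catalan_succ (n : ℕ) :
    ∑ p ∈ antidiagonal n, catalan p.1 * catalan (p.2 + 1) + catalan (n + 1) = catalan (n + 2) := by
  rw [catalan_succ' (n + 1), Nat.sum_antidiagonal_succ', catalan_zero, mul_one, add_comm]

theorem sum_antidiagonal_catalan_mul_catalan_add_two (n : ℕ) :
    ∑ p ∈ antidiagonal n, catalan p.1 * catalan (p.2 + 2) + catalan (n + 1) + catalan (n + 2) =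
      catalan (n + 3) := by
  have h := sum_antidiagonal_catalan_mul_catalan_succ (n + 1)
  rw [Nat.sum_antidiagonal_succ'] at h
  simp only [zero_add, catalan_one, mul_one, add_assoc, Nat.reduceAdd] at h
  omega

theorem catalanConv_three_add (n : ℕ) : catalanConv 3 n + catalan (n + 1) = catalan (n + 2) := by
  simp only [catalanConv_succ 2, catalanConv_two, sum_antidiagonal_catalan_mul_catalan_succ]

theorem catalanConv_four_add (n : ℕ) : catalanConv 4 n + 2 * catalan (n + 2) = catalan (n + 3) := by
  have hconv : catalanConv 4 n + ∑ p ∈ antidiagonal n, catalan p.1 * catalan (p.2 + 1) =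
      ∑ p ∈ antidiagonal n, catalan p.1 * catalan (p.2 + 2) := by
    rw [catalanConv_succ 3, ← sum_add_distrib]
    refine sum_congr rfl fun p _ => ?_
    rw [← mul_add, catalanConv_three_add]
  have h1 := sum_antidiagonal_catalan_mul_catalan_succ n
  have h2 := sum_antidiagonal_catalan_mul_catalan_add_two n
  omega

/-- For `s ≥ 2`,
`Σ_{u+v₁+v₂+v₃=s−2} (2u+1)·t_u·t_{v₁}·t_{v₂}·t_{v₃} = t_s·(s − 3s/(s+2)) = t_s·s(s−1)/(s+2)`. -/
theorem marked_pairs_count (s : ℕ) (hs : 2 ≤ s) :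
    (∑ l ∈ Finset.Nat.antidiagonalTuple 4 (s - 2),
        (2 * (l 0 : ℝ) + 1) * tReal (l 0) * tReal (l 1) * tReal (l 2) * tReal (l 3)) =
      tReal s * ((s : ℝ) - 3 * (s : ℝ) / ((s : ℝ) + 2)) ∧
    (∑ l ∈ Finset.Nat.antidiagonalTuple 4 (s - 2),
        (2 * (l 0 : ℝ) + 1) * tReal (l 0) * tReal (l 1) * tReal (l 2) * tReal (l 3)) =
      tReal s * ((s : ℝ) * ((s : ℝ) - 1) / ((s : ℝ) + 2)) := by
  obtain ⟨n, rfl⟩ : ∃ n, s = n + 2 := ⟨s - 2, by omega⟩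
  set S := ∑ l ∈ Finset.Nat.antidiagonalTuple 4 (n + 2 - 2),
    (2 * (l 0 : ℝ) + 1) * tReal (l 0) * tReal (l 1) * tReal (l 2) * tReal (l 3)
  have hsym : 4 * S = (2 * n + 4) * catalanConv 4 n := by
    simpa [S, catalanConv, tReal_eq_catalan, Fin.prod_univ_four, mul_assoc] using
      Nat.card_mul_sum_antidiagonalTuple_two_mul_apply_add_one_mul_prod n
        (fun k => (catalan k : ℝ)) (0 : Fin 4)
  have hconv : (catalanConv 4 n : ℝ) + 2 * catalan (n + 2) = catalan (n + 3) := by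
    exact_mod_cast catalanConv_four_add n
  have hratio : ((n : ℝ) + 4) * catalan (n + 3) = 2 * (2 * (n + 2) + 1) * catalan (n + 2) := by
    exact_mod_cast succ_succ_mul_catalan_succ (n + 2)
  have hS : S = catalan (n + 2) * (n + 2) * (n + 1) / (n + 4) := by
    rw [eq_div_iff (by positivity)]
    linear_combination (n + 4) / 4 * hsym + (n + 2) / 2 * (n + 4) * hconv + (n + 2) / 2 * hratio
  rw [hS, tReal_eq_catalan]
  push_cast
  constructor <;> field_simp <;> ring
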